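/- Under the assumptions of the semiboundedness theorem, suppose additionally there exist α ∈ (0,1], μ ≤ min σ(A₀) and C > 0 such that ‖\overline{M(λ)}‖ ≤ C/(μ−λ)^α for all λ < μ. Then min σ(A_[B]) ≥ μ − (C‖B₊‖)^{1/α}. -/

import Mathlib

/-!
For `l < μ - (C ‖B₊‖)^{1/α}` the decay estimate gives `‖B₊‖ ‖M(l)‖ < 1`. Writing `M(l) = R²`,
the bounded operator `1 - R B R` then has numerical range in `[1 - ‖B₊‖ ‖M(l)‖, ∞)`, so it is
invertible; this solves the boundary condition `Γ₀ f = B Γ₁ f` inside the decomposition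
`dom T = dom A₀ ∔ ker (T - l)`, and `A_[B] - l` is onto. A symmetric operator `A` with `A - l`
onto for every `l < λ₀` has bounded self-adjoint resolvents `(A - l)⁻¹` without negative
spectrum (for `t < 0`, `t - (A - l)⁻¹ = t (A - l - t⁻¹) (A - l)⁻¹`), hence nonnegative ones,
and `⟪A f, f⟫ ≥ l ‖f‖²` for all `l < λ₀`.
-/

open scoped InnerProductSpace

open Filter Topology Function

lemma re_inner_self_eq_norm_sq {E : Type*} [NormedAddCommGroup E] [InnerProductSpace ℂ E]
    (x : E) : (⟪x, x⟫_ℂ).re = ‖x‖ ^ 2 :=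
  inner_self_eq_norm_sq (𝕜 := ℂ) x

lemma mul_norm_le_norm_of_mul_sq_le_re_inner {E : Type*} [NormedAddCommGroup E]
    [InnerProductSpace ℂ E] {δ : ℝ} {x y : E} (h : δ * ‖x‖ ^ 2 ≤ (⟪y, x⟫_ℂ).re) :
    δ * ‖x‖ ≤ ‖y‖ := by
  rcases (norm_nonneg x).eq_or_lt with hx | hx
  · simp [← hx]
  · refine le_of_mul_le_mul_right ?_ hx
    calc δ * ‖x‖ * ‖x‖ = δ * ‖x‖ ^ 2 := by ring
      _ ≤ (⟪y, x⟫_ℂ).re := h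
      _ ≤ ‖y‖ * ‖x‖ := re_inner_le_norm (𝕜 := ℂ) y x

lemma mul_lt_one_of_lt_sub_rpow {α b C m μ l : ℝ} (hα : 0 < α) (hb : 0 ≤ b) (hC : 0 ≤ C)
    (hm : m ≤ C / (μ - l) ^ α) (hl : l < μ - (C * b) ^ (1 / α)) : b * m < 1 := by
  have hCb : 0 ≤ C * b := mul_nonneg hC hb
  have hlμ : (C * b) ^ (1 / α) < μ - l := by linarith
  have hpos : 0 < μ - l := (Real.rpow_nonneg hCb _).trans_lt hlμ
  have key : C * b < (μ - l) ^ α := by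
    have := Real.rpow_lt_rpow (Real.rpow_nonneg hCb _) hlμ hα
    rwa [← Real.rpow_mul hCb, one_div_mul_cancel hα.ne', Real.rpow_one] at this
  calc b * m ≤ b * (C / (μ - l) ^ α) := mul_le_mul_of_nonneg_left hm hb
    _ = C * b / (μ - l) ^ α := by ring
    _ < 1 := (div_lt_one (Real.rpow_pos_of_pos hpos α)).2 key

namespace LinearPMap

variable {E : Type*} [NormedAddCommGroup E] [InnerProductSpace ℂ E]

def shift (A : E →ₗ.[ℂ] E) (l : ℝ) : A.domain →ₗ[ℂ] E :=
  A.toFun - (l : ℂ) • A.domain.subtype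

@[simp]
lemma shift_apply (A : E →ₗ.[ℂ] E) (l : ℝ) (f : A.domain) :
    A.shift l f = A f - (l : ℂ) • (f : E) := rfl

lemma re_inner_shift_apply_self (A : E →ₗ.[ℂ] E) (l : ℝ) (f : A.domain) :
    (⟪A.shift l f, (f : E)⟫_ℂ).re = (⟪A f, (f : E)⟫_ℂ).re - l * ‖(f : E)‖ ^ 2 := by
  rw [shift_apply, inner_sub_left, inner_smul_left, Complex.conj_ofReal, Complex.sub_re,
    Complex.re_ofReal_mul, re_inner_self_eq_norm_sq]

variable {A : E →ₗ.[ℂ] E}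

lemma IsFormalAdjoint.inner_shift (hA : A.IsFormalAdjoint A) (l : ℝ) (f g : A.domain) :
    ⟪A.shift l f, (g : E)⟫_ℂ = ⟪(f : E), A.shift l g⟫_ℂ := by
  simp only [shift_apply, inner_sub_left, inner_sub_right, inner_smul_left, inner_smul_right,
    Complex.conj_ofReal, hA f g]

lemma IsFormalAdjoint.injective_shift (hA : A.IsFormalAdjoint A) {l : ℝ}
    (hl : Surjective (A.shift l)) : Injective (A.shift l) := by
  refine (injective_iff_map_eq_zero _).2 fun f hf => ?_
  obtain ⟨g, hg⟩ := hl f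
  have : ⟪(f : E), (f : E)⟫_ℂ = 0 := by
    calc ⟪(f : E), (f : E)⟫_ℂ = ⟪(f : E), A.shift l g⟫_ℂ := by rw [hg]
      _ = 0 := by rw [← hA.inner_shift, hf, inner_zero_left]
  exact Subtype.ext (inner_self_eq_zero.1 this)

lemma _root_.IsSelfAdjoint.isFormalAdjoint [CompleteSpace E] (hA : IsSelfAdjoint A) :
    A.IsFormalAdjoint A := by
  have h := adjoint_isFormalAdjoint hA.dense_domain
  rwa [isSelfAdjoint_def.1 hA] at h

lemma IsClosed.isClosed_range_shift [CompleteSpace E] (hA : A.IsClosed) {l δ : ℝ} (hδ : 0 < δ)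
    (hlb : ∀ f : A.domain, δ * ‖(f : E)‖ ≤ ‖A.shift l f‖) :
    _root_.IsClosed (LinearMap.range (A.shift l) : Set E) := by
  refine isClosed_of_closure_subset fun y hy => ?_
  obtain ⟨u, hu, hy⟩ := mem_closure_iff_seq_limit.1 hy
  choose g hg using hu
  have hdist : ∀ m n, dist (g m : E) (g n) ≤ δ⁻¹ * dist (u m) (u n) := fun m n => by
    rw [dist_eq_norm, dist_eq_norm, ← hg, ← hg, ← _root_.map_sub, ← Submodule.coe_sub,
      le_inv_mul_iff₀ hδ]
    exact hlb (g m - g n)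
  have hcauchy : CauchySeq fun n => (g n : E) := by
    refine Metric.cauchySeq_iff.2 fun ε hε => ?_
    obtain ⟨N, hN⟩ := Metric.cauchySeq_iff.1 hy.cauchySeq (δ * ε) (by positivity)
    refine ⟨N, fun m hm n hn => (hdist m n).trans_lt ?_⟩
    rw [inv_mul_lt_iff₀ hδ]
    exact hN m hm n hn
  obtain ⟨x, hx⟩ := cauchySeq_tendsto_of_complete hcauchy
  have hAg : Tendsto (fun n => A (g n)) atTop (𝓝 (y + (l : ℂ) • x)) := by
    simpa [← hg] using hy.add (hx.const_smul (l : ℂ))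
  obtain ⟨f, hfx, hfA⟩ := (mem_graph_iff A).1 <| hA.mem_of_tendsto (hx.prodMk_nhds hAg)
    (Eventually.of_forall fun n => A.mem_graph (g n))
  exact ⟨f, by simp [hfx, hfA]⟩

lemma _root_.IsSelfAdjoint.surjective_shift [CompleteSpace E] (hA : IsSelfAdjoint A) {σ₀ l : ℝ}
    (hlb : ∀ f : A.domain, σ₀ * ‖(f : E)‖ ^ 2 ≤ (⟪A f, (f : E)⟫_ℂ).re) (hl : l < σ₀) :
    Surjective (A.shift l) := by
  have hcoer : ∀ f : A.domain, (σ₀ - l) * ‖(f : E)‖ ^ 2 ≤ (⟪A.shift l f, (f : E)⟫_ℂ).re :=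
    fun f => by rw [re_inner_shift_apply_self]; linarith [hlb f]
  have hclosed := hA.isClosed.isClosed_range_shift (sub_pos.2 hl)
    fun f => mul_norm_le_norm_of_mul_sq_le_re_inner (hcoer f)
  rw [← LinearMap.range_eq_top, ← hclosed.submodule_topologicalClosure_eq,
    Submodule.topologicalClosure_eq_top_iff, Submodule.eq_bot_iff]
  intro w hw
  have hw' : ∀ f : A.domain, ⟪A.shift l f, w⟫_ℂ = 0 := fun f =>
    inner_eq_zero_symm.1 <| (Submodule.mem_orthogonal' _ w).1 hw _ (LinearMap.mem_range_self _ f)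
  have hwA : w ∈ A.domain := by
    rw [← isSelfAdjoint_def.1 hA]
    refine mem_adjoint_domain_of_exists w ⟨(l : ℂ) • w, fun f => ?_⟩
    have := hw' f
    rw [shift_apply, inner_sub_left, sub_eq_zero] at this
    rw [← inner_conj_symm w, this, inner_conj_symm, inner_smul_left, inner_smul_right,
      Complex.conj_ofReal]
  have hw0 : (σ₀ - l) * ‖w‖ ^ 2 ≤ (⟪A.shift l ⟨w, hwA⟩, w⟫_ℂ).re := hcoer ⟨w, hwA⟩
  rw [hw', Complex.zero_re] at hw0
  by_contra hw
  linarith [mul_pos (sub_pos.2 hl) (pow_pos (norm_pos_iff.2 hw) 2)]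

noncomputable def resolvent (A : E →ₗ.[ℂ] E) {l : ℝ} (h : Bijective (A.shift l)) :
    E →ₗ[ℂ] A.domain :=
  (LinearEquiv.ofBijective (A.shift l) h).symm.toLinearMap

@[simp]
lemma resolvent_shift {l : ℝ} (h : Bijective (A.shift l)) (f : A.domain) :
    A.resolvent h (A.shift l f) = f :=
  (LinearEquiv.ofBijective _ h).symm_apply_apply f

lemma IsFormalAdjoint.isSymmetric_resolvent (hA : A.IsFormalAdjoint A) {l : ℝ}
    (h : Bijective (A.shift l)) : (A.domain.subtype ∘ₗ A.resolvent h).IsSymmetric := by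
  intro x y
  obtain ⟨f, rfl⟩ := h.2 x
  obtain ⟨g, rfl⟩ := h.2 y
  simp only [LinearMap.comp_apply, resolvent_shift, Submodule.subtype_apply]
  exact (hA.inner_shift l f g).symm

lemma IsFormalAdjoint.re_inner_resolvent_nonneg [CompleteSpace E] (hA : A.IsFormalAdjoint A)
    {l : ℝ} (h : Bijective (A.shift l)) (hlt : ∀ l' < l, Surjective (A.shift l')) (x : E) :
    0 ≤ (⟪(A.resolvent h x : E), x⟫_ℂ).re := by
  set R := (hA.isSymmetric_resolvent h).toSelfAdjoint
  suffices hR : 0 ≤ (R : E →L[ℂ] E) from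
    ((ContinuousLinearMap.nonneg_iff_isPositive _).1 hR).re_inner_nonneg_left x
  rw [StarOrderedRing.nonneg_iff_spectrum_nonneg (R := ℝ) _ R.2]
  intro t ht
  by_contra! ht0
  have hsurj := hlt (l + t⁻¹) (add_lt_of_neg_right l (inv_lt_zero.2 ht0))
  have hfactor : ⇑(algebraMap ℝ (E →L[ℂ] E) t - R) =
      (fun y => (t : ℂ) • y) ∘ A.shift (l + t⁻¹) ∘ A.resolvent h := by
    funext x
    obtain ⟨g, rfl⟩ := h.2 x
    have hRg : (R : E →L[ℂ] E) (A.shift l g) = g := congrArg Subtype.val (resolvent_shift h g)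
    rw [comp_apply, comp_apply, resolvent_shift, _root_.sub_apply, hRg,
      ContinuousLinearMap.algebraMap_apply, shift_apply, shift_apply, ← Complex.coe_smul,
      smul_sub, smul_sub, smul_smul, smul_smul, Complex.ofReal_add, Complex.ofReal_inv, mul_add,
      mul_inv_cancel₀ (by exact_mod_cast ht0.ne), add_smul, one_smul]
    abel
  have hunit : IsUnit (algebraMap ℝ (E →L[ℂ] E) t - (R : E →L[ℂ] E)) := by
    rw [ContinuousLinearMap.isUnit_iff_bijective, hfactor]
    exact (IsUnit.mk0 _ (by exact_mod_cast ht0.ne)).smul_bijective.comp <|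
      Bijective.comp ⟨hA.injective_shift hsurj, hsurj⟩ (LinearEquiv.ofBijective _ h).symm.bijective
  exact spectrum.notMem_iff.2 hunit ht

lemma IsFormalAdjoint.mul_sq_le_re_inner [CompleteSpace E] (hA : A.IsFormalAdjoint A)
    {lam : ℝ} (hsurj : ∀ l < lam, Surjective (A.shift l)) (f : A.domain) :
    lam * ‖(f : E)‖ ^ 2 ≤ (⟪A f, (f : E)⟫_ℂ).re := by
  have hlt : ∀ l < lam, l * ‖(f : E)‖ ^ 2 ≤ (⟪A f, (f : E)⟫_ℂ).re := fun l hl => by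
    have hbij : Bijective (A.shift l) := ⟨hA.injective_shift (hsurj l hl), hsurj l hl⟩
    have h := hA.re_inner_resolvent_nonneg hbij (fun l' hl' => hsurj l' (hl'.trans hl))
      (A.shift l f)
    rw [resolvent_shift, ← inner_conj_symm, Complex.conj_re, re_inner_shift_apply_self] at h
    linarith
  exact le_of_tendsto ((continuous_id.mul continuous_const).tendsto lam |>.mono_left
    nhdsWithin_le_nhds) (eventually_nhdsWithin_of_forall (s := Set.Iio lam) hlt)

variable {G : Type*} [NormedAddCommGroup G] [InnerProductSpace ℂ G]

def sandwich (B : G →ₗ.[ℂ] G) (R : G →L[ℂ] G) (hR : ∀ x, R x ∈ B.domain) : G →ₗ[ℂ] G :=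
  (R : G →ₗ[ℂ] G) ∘ₗ B.toFun ∘ₗ (R : G →ₗ[ℂ] G).codRestrict B.domain hR

@[simp]
lemma sandwich_apply (B : G →ₗ.[ℂ] G) (R : G →L[ℂ] G) (hR : ∀ x, R x ∈ B.domain) (x : G) :
    B.sandwich R hR x = R (B ⟨R x, hR x⟩) := rfl

variable {B : G →ₗ.[ℂ] G} {R : G →L[ℂ] G}

lemma re_inner_le_norm_mul_sq_of_eq_sub {Bm : G →ₗ.[ℂ] G} (Bp : G →L[ℂ] G)
    (hBm_dom : Bm.domain = B.domain) (hBm_nn : ∀ φ : Bm.domain, 0 ≤ (⟪Bm φ, (φ : G)⟫_ℂ).re)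
    (hdecomp : ∀ x : G, ∀ (hxB : x ∈ B.domain) (hxBm : x ∈ Bm.domain),
      B ⟨x, hxB⟩ = Bp x - Bm ⟨x, hxBm⟩) (φ : B.domain) :
    (⟪B φ, (φ : G)⟫_ℂ).re ≤ ‖Bp‖ * ‖(φ : G)‖ ^ 2 := by
  have hφ : (φ : G) ∈ Bm.domain := by rw [hBm_dom]; exact φ.2
  rw [hdecomp φ φ.2 hφ, inner_sub_left, Complex.sub_re]
  calc (⟪Bp φ, (φ : G)⟫_ℂ).re - (⟪Bm ⟨φ, hφ⟩, (φ : G)⟫_ℂ).re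
      ≤ ‖Bp φ‖ * ‖(φ : G)‖ := by
        have hBm : 0 ≤ (⟪Bm ⟨φ, hφ⟩, (φ : G)⟫_ℂ).re := hBm_nn ⟨φ, hφ⟩
        have hBp : (⟪Bp φ, (φ : G)⟫_ℂ).re ≤ ‖Bp φ‖ * ‖(φ : G)‖ := re_inner_le_norm (𝕜 := ℂ) _ _
        linarith
    _ ≤ ‖Bp‖ * ‖(φ : G)‖ ^ 2 := by
        rw [sq, ← mul_assoc]
        exact mul_le_mul_of_nonneg_right (Bp.le_opNorm _) (norm_nonneg _)

lemma exists_eq_apply_add_apply {M : G →L[ℂ] G} (hRR : R ∘L R = M)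
    (hRB : ∀ x, R x ∈ B.domain)
    (hJ : Surjective (LinearMap.id - B.sandwich R hRB : G →ₗ[ℂ] G)) (ψ : B.domain) :
    ∃ (u : G) (hu : M u ∈ B.domain), u = B ψ + B ⟨M u, hu⟩ := by
  obtain ⟨w, hw⟩ := hJ (R (B ψ))
  set u := B ψ + B ⟨R w, hRB w⟩
  have hMu : M u = R w := by
    rw [← hRR, ContinuousLinearMap.comp_apply, _root_.map_add]
    simp only [LinearMap.sub_apply, LinearMap.id_apply, sandwich_apply] at hw
    rw [← hw, sub_add_cancel]
  refine ⟨u, hMu ▸ hRB w, ?_⟩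
  rw [show (⟨M u, _⟩ : B.domain) = ⟨R w, hRB w⟩ from Subtype.ext hMu]

variable [CompleteSpace G]

lemma IsFormalAdjoint.isSymmetric_sandwich (hB : B.IsFormalAdjoint B) (hR : IsSelfAdjoint R)
    (hRB : ∀ x, R x ∈ B.domain) : (B.sandwich R hRB).IsSymmetric := fun x y => by
  have hRs : ∀ x y, ⟪R x, y⟫_ℂ = ⟪x, R y⟫_ℂ := hR.isSymmetric
  rw [sandwich_apply, sandwich_apply, hRs, ← hRs x]
  exact hB ⟨R x, hRB x⟩ ⟨R y, hRB y⟩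

lemma re_inner_sandwich_le (hR : IsSelfAdjoint R) (hRB : ∀ x, R x ∈ B.domain) {b : ℝ}
    (hb : 0 ≤ b) (hBle : ∀ φ : B.domain, (⟪B φ, (φ : G)⟫_ℂ).re ≤ b * ‖(φ : G)‖ ^ 2) (x : G) :
    (⟪B.sandwich R hRB x, x⟫_ℂ).re ≤ b * ‖R ∘L R‖ * ‖x‖ ^ 2 := by
  have hRs : ∀ x y, ⟪R x, y⟫_ℂ = ⟪x, R y⟫_ℂ := hR.isSymmetric
  have hRx : ‖R x‖ ^ 2 ≤ ‖R ∘L R‖ * ‖x‖ ^ 2 := by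
    rw [← re_inner_self_eq_norm_sq, hRs]
    calc (⟪x, R (R x)⟫_ℂ).re ≤ ‖x‖ * ‖(R ∘L R) x‖ := re_inner_le_norm (𝕜 := ℂ) _ _
      _ ≤ ‖R ∘L R‖ * ‖x‖ ^ 2 := by
        nlinarith [(R ∘L R).le_opNorm x, norm_nonneg x]
  rw [sandwich_apply, hRs, mul_assoc]
  exact (hBle ⟨R x, hRB x⟩).trans (mul_le_mul_of_nonneg_left hRx hb)

lemma IsFormalAdjoint.surjective_id_sub_sandwich (hB : B.IsFormalAdjoint B)
    (hR : IsSelfAdjoint R) (hRB : ∀ x, R x ∈ B.domain) {b : ℝ} (hb : 0 ≤ b)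
    (hBle : ∀ φ : B.domain, (⟪B φ, (φ : G)⟫_ℂ).re ≤ b * ‖(φ : G)‖ ^ 2)
    (hq : b * ‖R ∘L R‖ < 1) : Surjective (LinearMap.id - B.sandwich R hRB : G →ₗ[ℂ] G) := by
  set K := (hB.isSymmetric_sandwich hR hRB).toSelfAdjoint
  have hunit : IsUnit (1 - (K : G →L[ℂ] G)) := by
    refine ContinuousLinearMap.isUnit_of_forall_le_norm_inner_map _
      (c := ⟨1 - b * ‖R ∘L R‖, by linarith⟩) (sub_pos.2 hq) fun x => ?_
    have hK := re_inner_sandwich_le hR hRB hb hBle x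
    calc ‖x‖ ^ 2 * (1 - b * ‖R ∘L R‖) ≤ (⟪(1 - (K : G →L[ℂ] G)) x, x⟫_ℂ).re := by
          rw [_root_.sub_apply, inner_sub_left, Complex.sub_re, one_apply_eq_self,
            re_inner_self_eq_norm_sq]
          change _ ≤ _ - (⟪B.sandwich R hRB x, x⟫_ℂ).re
          linarith
      _ ≤ ‖⟪(1 - (K : G →L[ℂ] G)) x, x⟫_ℂ‖ := Complex.re_le_norm _
  exact (ContinuousLinearMap.isUnit_iff_bijective.1 hunit).2

end LinearPMap

section BoundaryTriple

open LinearPMap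

variable {H G : Type*} [NormedAddCommGroup H] [InnerProductSpace ℂ H]
  [NormedAddCommGroup G] [InnerProductSpace ℂ G]
  {T : H →ₗ.[ℂ] H} {Γ₀ Γ₁ : T.domain →ₗ[ℂ] G}

lemma isFormalAdjoint_of_green
    (hGreen : ∀ f g : T.domain,
      ⟪T f, (g : H)⟫_ℂ - ⟪(f : H), T g⟫_ℂ = ⟪Γ₁ f, Γ₀ g⟫_ℂ - ⟪Γ₀ f, Γ₁ g⟫_ℂ)
    {B : G →ₗ.[ℂ] G} (hB : B.IsFormalAdjoint B) (hranΓ₁ : ∀ f : T.domain, Γ₁ f ∈ B.domain)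
    {A : H →ₗ.[ℂ] H} (hAsub : A.domain ≤ T.domain)
    (hAeq : ∀ f : A.domain, A f = T ⟨f.1, hAsub f.2⟩)
    (hAdom : ∀ x (hx : x ∈ T.domain),
      x ∈ A.domain ↔ Γ₀ ⟨x, hx⟩ = B ⟨Γ₁ ⟨x, hx⟩, hranΓ₁ ⟨x, hx⟩⟩) :
    A.IsFormalAdjoint A := fun f g => by
  have hf := (hAdom f (hAsub f.2)).1 f.2
  have hg := (hAdom g (hAsub g.2)).1 g.2
  have h := hGreen ⟨f, hAsub f.2⟩ ⟨g, hAsub g.2⟩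
  rwa [hf, hg, ← hB ⟨_, hranΓ₁ _⟩ ⟨_, hranΓ₁ _⟩, sub_self, sub_eq_zero, ← hAeq, ← hAeq] at h

lemma exists_apply_eq_smul_and_eq_of_surjective_shift {A₀ : H →ₗ.[ℂ] H}
    (hA₀sub : A₀.domain ≤ T.domain) (hA₀eq : ∀ f : A₀.domain, A₀ f = T ⟨f.1, hA₀sub f.2⟩)
    (hA₀dom : ∀ x (hx : x ∈ T.domain), x ∈ A₀.domain ↔ Γ₀ ⟨x, hx⟩ = 0)
    {l : ℝ} (hA₀l : Surjective (A₀.shift l)) (g : T.domain) :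
    ∃ f : T.domain, T f = (l : ℂ) • (f : H) ∧ Γ₀ f = Γ₀ g := by
  obtain ⟨g₀, hg₀⟩ := hA₀l (T g - (l : ℂ) • (g : H))
  refine ⟨g - ⟨g₀, hA₀sub g₀.2⟩, ?_, ?_⟩
  · rw [shift_apply] at hg₀
    rw [LinearPMap.map_sub, ← hA₀eq, Submodule.coe_sub]
    linear_combination (norm := module) -hg₀
  · rw [_root_.map_sub, (hA₀dom g₀ (hA₀sub g₀.2)).1 g₀.2, sub_zero]

lemma surjective_shift_of_exists_eq_apply_add_apply {A₀ : H →ₗ.[ℂ] H}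
    (hA₀sub : A₀.domain ≤ T.domain) (hA₀eq : ∀ f : A₀.domain, A₀ f = T ⟨f.1, hA₀sub f.2⟩)
    (hA₀dom : ∀ x (hx : x ∈ T.domain), x ∈ A₀.domain ↔ Γ₀ ⟨x, hx⟩ = 0)
    {l : ℝ} (hA₀l : Surjective (A₀.shift l)) {M : G →L[ℂ] G}
    (hWeyl : ∀ f : T.domain, T f = (l : ℂ) • (f : H) → M (Γ₀ f) = Γ₁ f)
    {B : G →ₗ.[ℂ] G} (hBM : ∀ (x : G) (h : M x ∈ B.domain), B ⟨M x, h⟩ ∈ Set.range Γ₀)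
    (hranΓ₁ : ∀ f : T.domain, Γ₁ f ∈ B.domain)
    (hBΓ₁ : ∀ f : T.domain, B ⟨Γ₁ f, hranΓ₁ f⟩ ∈ Set.range Γ₀)
    (hfix : ∀ ψ : B.domain, ∃ (u : G) (hu : M u ∈ B.domain), u = B ψ + B ⟨M u, hu⟩)
    {A : H →ₗ.[ℂ] H} (hAsub : A.domain ≤ T.domain)
    (hAeq : ∀ f : A.domain, A f = T ⟨f.1, hAsub f.2⟩)
    (hAdom : ∀ x (hx : x ∈ T.domain),
      x ∈ A.domain ↔ Γ₀ ⟨x, hx⟩ = B ⟨Γ₁ ⟨x, hx⟩, hranΓ₁ ⟨x, hx⟩⟩) :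
    Surjective (A.shift l) := by
  intro h
  obtain ⟨f₀, hf₀⟩ := hA₀l h
  set f₀' : T.domain := ⟨f₀, hA₀sub f₀.2⟩
  obtain ⟨u, hu, hufix⟩ := hfix ⟨Γ₁ f₀', hranΓ₁ f₀'⟩
  obtain ⟨g, hg⟩ : u ∈ LinearMap.range Γ₀ := by
    rw [hufix]
    exact add_mem (hBΓ₁ f₀') (hBM u hu)
  obtain ⟨fl, hTfl, hΓ₀fl⟩ :=
    exists_apply_eq_smul_and_eq_of_surjective_shift hA₀sub hA₀eq hA₀dom hA₀l g
  set f := f₀' + fl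
  have hΓ₀f : Γ₀ f = u := by
    rw [_root_.map_add, (hA₀dom f₀ (hA₀sub f₀.2)).1 f₀.2, hΓ₀fl, hg, zero_add]
  have hΓ₁f : Γ₁ f = Γ₁ f₀' + M u := by
    rw [_root_.map_add, ← hWeyl fl hTfl, hΓ₀fl, hg]
  have hfA : (f : H) ∈ A.domain := by
    refine (hAdom f f.2).2 ?_
    rw [hΓ₀f, hufix, ← LinearPMap.map_add]
    exact congrArg B (Subtype.ext hΓ₁f.symm)
  refine ⟨⟨f, hfA⟩, ?_⟩
  rw [shift_apply] at hf₀ ⊢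
  rw [hAeq, ← hf₀]
  change T (f₀' + fl) - (l : ℂ) • ((f₀ : H) + fl) = _
  rw [LinearPMap.map_add, hTfl, ← hA₀eq]
  module

end BoundaryTriple

theorem stmt11_general
    {H G : Type*}
    [NormedAddCommGroup H] [InnerProductSpace ℂ H] [CompleteSpace H]
    [NormedAddCommGroup G] [InnerProductSpace ℂ G] [CompleteSpace G]
    (T : H →ₗ.[ℂ] H)
    (Γ₀ Γ₁ : T.domain →ₗ[ℂ] G)
    -- abstract Green identity
    (hGreen : ∀ f g : T.domain,
      ⟪T f, (g : H)⟫_ℂ - ⟪(f : H), T g⟫_ℂ = ⟪Γ₁ f, Γ₀ g⟫_ℂ - ⟪Γ₀ f, Γ₁ g⟫_ℂ)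
    -- A₀ = T ↾ ker Γ₀ is self-adjoint and bounded from below by σ₀
    (A₀ : H →ₗ.[ℂ] H) (hA₀sub : A₀.domain ≤ T.domain)
    (hA₀eq : ∀ f : A₀.domain, A₀ f = T ⟨f.1, hA₀sub f.2⟩)
    (hA₀dom : ∀ x (hx : x ∈ T.domain), x ∈ A₀.domain ↔ Γ₀ ⟨x, hx⟩ = 0)
    (hA₀sa : IsSelfAdjoint A₀)
    (σ₀ : ℝ)
    (hA₀lb : ∀ f : A₀.domain, σ₀ * ‖(f : H)‖ ^ 2 ≤ (⟪A₀ f, (f : H)⟫_ℂ).re)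
    -- Mbar λ is the (bounded) closure of the Weyl function M(λ) for λ < σ₀
    (Mbar : ℝ → (G →L[ℂ] G))
    (hWeyl : ∀ l : ℝ, l < σ₀ → ∀ f : T.domain,
      T f = (l : ℂ) • (f : H) → Mbar l (Γ₀ f) = Γ₁ f)
    -- R λ = (Mbar λ)^{1/2}, the non-negative square root
    (R : ℝ → (G →L[ℂ] G))
    (hRsa : ∀ l : ℝ, l < σ₀ → IsSelfAdjoint (R l))
    (hRR : ∀ l : ℝ, l < σ₀ → R l ∘L R l = Mbar l)
    -- B self-adjoint and bounded from above
    (B : G →ₗ.[ℂ] G) (hBsa : IsSelfAdjoint B)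
    -- (ii) ran (Mbar λ)^{1/2} ⊆ dom B for all λ < σ₀
    (hranR : ∀ l : ℝ, l < σ₀ → ∀ x : G, R l x ∈ B.domain)
    -- (iii) B (ran Mbar λ) ⊆ ran Γ₀ for all λ < σ₀
    (hBM : ∀ (l : ℝ), l < σ₀ → ∀ (x : G) (h : Mbar l x ∈ B.domain),
      B ⟨Mbar l x, h⟩ ∈ Set.range Γ₀)
    -- (iv) ran Γ₁ ⊆ dom B
    (hranΓ₁ : ∀ f : T.domain, Γ₁ f ∈ B.domain)
    -- (v) B (ran Γ₁) ⊆ ran Γ₀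
    (hBΓ₁ : ∀ f : T.domain, B ⟨Γ₁ f, hranΓ₁ f⟩ ∈ Set.range Γ₀)
    -- A = A_[B] = T ↾ {f ∈ dom T : Γ₀ f = B Γ₁ f}
    (A : H →ₗ.[ℂ] H) (hAsub : A.domain ≤ T.domain)
    (hAeq : ∀ f : A.domain, A f = T ⟨f.1, hAsub f.2⟩)
    (hAdom : ∀ x (hx : x ∈ T.domain),
      x ∈ A.domain ↔ Γ₀ ⟨x, hx⟩ = B ⟨Γ₁ ⟨x, hx⟩, hranΓ₁ ⟨x, hx⟩⟩)
    -- B = B₊ − B₋ via the spectral measure: B₊ bounded non-negative, B₋ ≥ 0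
    (Bp : G →L[ℂ] G)
    (Bm : G →ₗ.[ℂ] G) (hBm_dom : Bm.domain = B.domain)
    (hBm_nn : ∀ φ : Bm.domain, 0 ≤ (⟪Bm φ, (φ : G)⟫_ℂ).re)
    (hdecomp : ∀ x : G, ∀ (hxB : x ∈ B.domain) (hxBm : x ∈ Bm.domain),
      B ⟨x, hxB⟩ = Bp x - Bm ⟨x, hxBm⟩)
    -- the decay estimate ‖Mbar λ‖ ≤ C/(μ − λ)^α for λ < μ
    (α : ℝ) (hα : α ∈ Set.Ioc (0 : ℝ) 1) (μ : ℝ) (hμ : μ ≤ σ₀) (C : ℝ) (hC : 0 < C)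
    (hMdecay : ∀ l : ℝ, l < μ → ‖Mbar l‖ ≤ C / (μ - l) ^ α) :
    -- conclusion: min σ(A_[B]) ≥ μ − (C ‖B₊‖)^{1/α}
    ∀ f : A.domain,
      (μ - (C * ‖Bp‖) ^ (1 / α)) * ‖(f : H)‖ ^ 2 ≤ (⟪A f, (f : H)⟫_ℂ).re := by
  have hB : B.IsFormalAdjoint B := hBsa.isFormalAdjoint
  refine (isFormalAdjoint_of_green hGreen hB hranΓ₁ hAsub hAeq hAdom).mul_sq_le_re_inner
    fun l hl => ?_
  have hlμ : l < μ := hl.trans_le (sub_le_self _ (by positivity))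
  have hlσ : l < σ₀ := hlμ.trans_le hμ
  have hq : ‖Bp‖ * ‖R l ∘L R l‖ < 1 := by
    rw [hRR l hlσ]
    exact mul_lt_one_of_lt_sub_rpow hα.1 (norm_nonneg _) hC.le (hMdecay l hlμ) hl
  have hJ := hB.surjective_id_sub_sandwich (hRsa l hlσ) (hranR l hlσ) (norm_nonneg _)
    (LinearPMap.re_inner_le_norm_mul_sq_of_eq_sub Bp hBm_dom hBm_nn hdecomp) hq
  exact surjective_shift_of_exists_eq_apply_add_apply hA₀sub hA₀eq hA₀dom
    (hA₀sa.surjective_shift hA₀lb hlσ) (hWeyl l hlσ) (hBM l hlσ) hranΓ₁ hBΓ₁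
    (LinearPMap.exists_eq_apply_add_apply (hRR l hlσ) (hranR l hlσ) hJ) hAsub hAeq hAdom

/-- Under the assumptions of the semiboundedness theorem, suppose
additionally that there exist `α ∈ (0,1]`, `μ ≤ min σ(A₀)` and `C > 0` with
`‖Mbar λ‖ ≤ C/(μ − λ)^α` for all `λ < μ`.  Then
`min σ(A_[B]) ≥ μ − (C ‖B₊‖)^{1/α}`, where `B₊` is the (bounded) positive part
of `B`. -/
theorem stmt11
    {H G : Type*}
    [NormedAddCommGroup H] [InnerProductSpace ℂ H] [CompleteSpace H]
    [NormedAddCommGroup G] [InnerProductSpace ℂ G] [CompleteSpace G]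
    (T : H →ₗ.[ℂ] H) (hTdense : Dense (T.domain : Set H))
    (Γ₀ Γ₁ : T.domain →ₗ[ℂ] G)
    -- abstract Green identity
    (hGreen : ∀ f g : T.domain,
      ⟪T f, (g : H)⟫_ℂ - ⟪(f : H), T g⟫_ℂ = ⟪Γ₁ f, Γ₀ g⟫_ℂ - ⟪Γ₀ f, Γ₁ g⟫_ℂ)
    -- (Γ₀, Γ₁) has dense range
    (hdense : Dense (Set.range fun f : T.domain => (Γ₀ f, Γ₁ f)))
    -- A₀ = T ↾ ker Γ₀ is self-adjoint and bounded from below by σ₀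
    (A₀ : H →ₗ.[ℂ] H) (hA₀sub : A₀.domain ≤ T.domain)
    (hA₀eq : ∀ f : A₀.domain, A₀ f = T ⟨f.1, hA₀sub f.2⟩)
    (hA₀dom : ∀ x (hx : x ∈ T.domain), x ∈ A₀.domain ↔ Γ₀ ⟨x, hx⟩ = 0)
    (hA₀sa : IsSelfAdjoint A₀)
    (σ₀ : ℝ)
    (hA₀lb : ∀ f : A₀.domain, σ₀ * ‖(f : H)‖ ^ 2 ≤ (⟪A₀ f, (f : H)⟫_ℂ).re)
    -- Mbar λ is the (bounded) closure of the Weyl function M(λ) for λ < σ₀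
    (Mbar : ℝ → (G →L[ℂ] G))
    (hWeyl : ∀ l : ℝ, l < σ₀ → ∀ f : T.domain,
      T f = (l : ℂ) • (f : H) → Mbar l (Γ₀ f) = Γ₁ f)
    -- (i) ‖Mbar λ‖ → 0 as λ → −∞
    (hdecay : Filter.Tendsto (fun l => ‖Mbar l‖) Filter.atBot (nhds 0))
    -- R λ = (Mbar λ)^{1/2}, the non-negative square root
    (R : ℝ → (G →L[ℂ] G))
    (hRsa : ∀ l : ℝ, l < σ₀ → IsSelfAdjoint (R l))
    (hRnn : ∀ l : ℝ, l < σ₀ → ∀ x : G, 0 ≤ (⟪R l x, x⟫_ℂ).re)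
    (hRR : ∀ l : ℝ, l < σ₀ → R l ∘L R l = Mbar l)
    -- B self-adjoint and bounded from above
    (B : G →ₗ.[ℂ] G) (hBsa : IsSelfAdjoint B)
    (hBub : ∃ c : ℝ, ∀ φ : B.domain, (⟪B φ, (φ : G)⟫_ℂ).re ≤ c * ‖(φ : G)‖ ^ 2)
    -- (ii) ran (Mbar λ)^{1/2} ⊆ dom B for all λ < σ₀
    (hranR : ∀ l : ℝ, l < σ₀ → ∀ x : G, R l x ∈ B.domain)
    -- (iii) B (ran Mbar λ) ⊆ ran Γ₀ for all λ < σ₀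
    (hBM : ∀ (l : ℝ), l < σ₀ → ∀ (x : G) (h : Mbar l x ∈ B.domain),
      B ⟨Mbar l x, h⟩ ∈ Set.range Γ₀)
    -- (iv) ran Γ₁ ⊆ dom B
    (hranΓ₁ : ∀ f : T.domain, Γ₁ f ∈ B.domain)
    -- (v) B (ran Γ₁) ⊆ ran Γ₀
    (hBΓ₁ : ∀ f : T.domain, B ⟨Γ₁ f, hranΓ₁ f⟩ ∈ Set.range Γ₀)
    -- A = A_[B] = T ↾ {f ∈ dom T : Γ₀ f = B Γ₁ f}
    (A : H →ₗ.[ℂ] H) (hAsub : A.domain ≤ T.domain)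
    (hAeq : ∀ f : A.domain, A f = T ⟨f.1, hAsub f.2⟩)
    (hAdom : ∀ x (hx : x ∈ T.domain),
      x ∈ A.domain ↔ Γ₀ ⟨x, hx⟩ = B ⟨Γ₁ ⟨x, hx⟩, hranΓ₁ ⟨x, hx⟩⟩)
    -- B = B₊ − B₋ via the spectral measure: B₊ bounded non-negative, B₋ ≥ 0
    (Bp : G →L[ℂ] G) (hBp_sa : IsSelfAdjoint Bp) (hBp_nn : ∀ x : G, 0 ≤ (⟪Bp x, x⟫_ℂ).re)
    (Bm : G →ₗ.[ℂ] G) (hBm_dom : Bm.domain = B.domain)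
    (hBm_nn : ∀ φ : Bm.domain, 0 ≤ (⟪Bm φ, (φ : G)⟫_ℂ).re)
    (hdecomp : ∀ x : G, ∀ (hxB : x ∈ B.domain) (hxBm : x ∈ Bm.domain),
      B ⟨x, hxB⟩ = Bp x - Bm ⟨x, hxBm⟩)
    -- the decay estimate ‖Mbar λ‖ ≤ C/(μ − λ)^α for λ < μ
    (α : ℝ) (hα : α ∈ Set.Ioc (0 : ℝ) 1) (μ : ℝ) (hμ : μ ≤ σ₀) (C : ℝ) (hC : 0 < C)
    (hMdecay : ∀ l : ℝ, l < μ → ‖Mbar l‖ ≤ C / (μ - l) ^ α) :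
    -- conclusion: min σ(A_[B]) ≥ μ − (C ‖B₊‖)^{1/α}
    ∀ f : A.domain,
      (μ - (C * ‖Bp‖) ^ (1 / α)) * ‖(f : H)‖ ^ 2 ≤ (⟪A f, (f : H)⟫_ℂ).re :=
  stmt11_general T Γ₀ Γ₁ hGreen A₀ hA₀sub hA₀eq hA₀dom hA₀sa σ₀ hA₀lb Mbar hWeyl R hRsa hRR B hBsa
    hranR hBM hranΓ₁ hBΓ₁ A hAsub hAeq hAdom Bp Bm hBm_dom hBm_nn hdecomp α hα μ hμ C hC hMdecay
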